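/- arXiv:2406.15712 — 3 statements merged into one kernel-verified Lean document; each statement's English description precedes it below -/
import Mathlib

section
/- Let H be a self-adjoint bounded operator on ℓ²(ℕ; ℂ^m) that is block-tridiagonal with respect to a decomposition into blocks U₀, U₁, U₂, … (i.e., J_i* H J_j = 0 for |i−j| > 1, where J_j is the inclusion of block j). Fix z ∉ σ(H) and suppose that for each j, the restriction H_{j↔n} of H to blocks j through n satisfies ‖H_{j-1,j}‖·‖(z − H_{j↔n})^{-1}‖ ≤ q < 1. Then for k < n, ‖J_k* (z − H_{0↔n})^{-1} J_n‖ ≤ ‖(z − H_{0↔n})^{-1}‖ · q^{n−k}. -/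
/-- exponential off-diagonal decay of the resolvent of a
block-tridiagonal self-adjoint operator, via the Schur-complement iteration.
`P j` are the mutually orthogonal block projections, `Q j n = Σ_{l=j}^n P l`,
`R j` is the inverse of `z − H_{j↔n}` on the range of `Q j n`. -/
theorem block_tridiagonal_resolvent_decay {E : Type*} [NormedAddCommGroup E]
    [InnerProductSpace ℂ E] [CompleteSpace E]
    (H : E →L[ℂ] E) (hH : IsSelfAdjoint H)
    (P : ℕ → E →L[ℂ] E)
    (hPproj : ∀ j, IsIdempotentElem (P j) ∧ IsSelfAdjoint (P j))
    (hPorth : ∀ i j, i ≠ j → (P i).comp (P j) = 0)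
    (htri : ∀ i j : ℕ, 1 < (max i j) - (min i j) → ((P i).comp H).comp (P j) = 0)
    (z : ℂ) (hz : z ∉ spectrum ℂ H)
    (n : ℕ) (R : ℕ → E →L[ℂ] E)
    (hRside : ∀ j ≤ n, R j =
      ((∑ l ∈ Finset.Icc j n, P l).comp (R j)).comp (∑ l ∈ Finset.Icc j n, P l))
    (hRinv : ∀ j ≤ n,
      (z • (∑ l ∈ Finset.Icc j n, P l) -
          ((∑ l ∈ Finset.Icc j n, P l).comp H).comp (∑ l ∈ Finset.Icc j n, P l)).comp (R j)
        = ∑ l ∈ Finset.Icc j n, P l ∧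
      (R j).comp (z • (∑ l ∈ Finset.Icc j n, P l) -
          ((∑ l ∈ Finset.Icc j n, P l).comp H).comp (∑ l ∈ Finset.Icc j n, P l))
        = ∑ l ∈ Finset.Icc j n, P l)
    (q : ℝ) (hq0 : 0 ≤ q) (hq1 : q < 1)
    (hcontr : ∀ j, 1 ≤ j → j ≤ n →
      ‖((P (j - 1)).comp H).comp (P j)‖ * ‖R j‖ ≤ q)
    (k : ℕ) (hk : k < n) :
    ‖((P k).comp (R 0)).comp (P n)‖ ≤ ‖R 0‖ * q ^ (n - k) := by
  simp only [← ContinuousLinearMap.mul_def] at htri hRside hRinv hcontr ⊢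
  -- basic projection facts
  have hPP : ∀ i, P i * P i = P i := fun i => (hPproj i).1.eq
  have hPO : ∀ i j : ℕ, i ≠ j → P i * P j = 0 := by
    intro i j h
    rw [ContinuousLinearMap.mul_def]
    exact hPorth i j h
  have hPnorm : ∀ i, ‖P i‖ ≤ 1 := by
    intro i
    have h1 : ‖P i‖ * ‖P i‖ = ‖P i‖ := by
      rw [← CStarRing.norm_star_mul_self, (hPproj i).2.star_eq, hPP i]
    nlinarith [norm_nonneg (P i)]
  -- interaction of partial sums of projections
  have hSP : ∀ a l : ℕ, a ≤ l → l ≤ n →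
      (∑ m ∈ Finset.Icc a n, P m) * P l = P l := by
    intro a l hal hln
    rw [Finset.sum_mul, Finset.sum_eq_single l (fun b _ hbl => hPO b l hbl)
      (fun h => absurd (Finset.mem_Icc.mpr ⟨hal, hln⟩) h)]
    exact hPP l
  have hPS : ∀ a l : ℕ, a ≤ l → l ≤ n →
      P l * (∑ m ∈ Finset.Icc a n, P m) = P l := by
    intro a l hal hln
    rw [Finset.mul_sum, Finset.sum_eq_single l (fun b _ hbl => hPO l b (Ne.symm hbl))
      (fun h => absurd (Finset.mem_Icc.mpr ⟨hal, hln⟩) h)]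
    exact hPP l
  have hPS0 : ∀ a l : ℕ, l < a → P l * (∑ m ∈ Finset.Icc a n, P m) = 0 := by
    intro a l hla
    rw [Finset.mul_sum]
    refine Finset.sum_eq_zero fun m hm => ?_
    rw [Finset.mem_Icc] at hm
    exact hPO l m (by omega)
  have hSS : ∀ a b : ℕ, a ≤ b →
      (∑ m ∈ Finset.Icc a n, P m) * (∑ l ∈ Finset.Icc b n, P l)
        = ∑ l ∈ Finset.Icc b n, P l := by
    intro a b hab
    rw [Finset.mul_sum]
    refine Finset.sum_congr rfl fun l hl => ?_
    rw [Finset.mem_Icc] at hl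
    exact hSP a l (hab.trans hl.1) hl.2
  have hSS' : ∀ a b : ℕ, a ≤ b →
      (∑ l ∈ Finset.Icc b n, P l) * (∑ m ∈ Finset.Icc a n, P m)
        = ∑ l ∈ Finset.Icc b n, P l := by
    intro a b hab
    rw [Finset.sum_mul]
    refine Finset.sum_congr rfl fun l hl => ?_
    rw [Finset.mem_Icc] at hl
    exact hPS a l (hab.trans hl.1) hl.2
  have hRS : ∀ j, j ≤ n → R j * (∑ l ∈ Finset.Icc j n, P l) = R j ∧
      (∑ l ∈ Finset.Icc j n, P l) * R j = R j := by
    intro j hj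
    constructor
    · conv_lhs => rw [hRside j hj]
      rw [mul_assoc ((∑ l ∈ Finset.Icc j n, P l) * R j), hSS j j le_rfl]
      exact (hRside j hj).symm
    · conv_lhs => rw [hRside j hj]
      rw [← mul_assoc, ← mul_assoc, hSS j j le_rfl]
      exact (hRside j hj).symm
  -- tridiagonality: the coupling term
  have hDHS : ∀ j : ℕ, 1 ≤ j → j ≤ n →
      (∑ l ∈ Finset.Icc 0 (j-1), P l) * H * (∑ m ∈ Finset.Icc j n, P m)
        = P (j-1) * H * P j := by
    intro j h1 hjn
    rw [Finset.sum_mul, Finset.sum_mul]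
    simp only [Finset.mul_sum]
    have step : (∑ l ∈ Finset.Icc 0 (j-1), ∑ m ∈ Finset.Icc j n, P l * H * P m)
        = ∑ m ∈ Finset.Icc j n, P (j-1) * H * P m := by
      refine Finset.sum_eq_single _ ?_ ?_
      · intro b hb hbne
        refine Finset.sum_eq_zero fun m hm => ?_
        rw [Finset.mem_Icc] at hb hm
        exact htri b m (by omega)
      · intro h
        exact absurd (Finset.mem_Icc.mpr ⟨Nat.zero_le _, le_rfl⟩) h
    rw [step]
    refine Finset.sum_eq_single _ ?_ ?_
    · intro m hm hmne
      rw [Finset.mem_Icc] at hm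
      exact htri (j-1) m (by omega)
    · intro h
      exact absurd (Finset.mem_Icc.mpr ⟨le_rfl, hjn⟩) h
  have hsplit : ∀ j : ℕ, 1 ≤ j → j ≤ n →
      (∑ l ∈ Finset.Icc 0 n, P l)
        = (∑ l ∈ Finset.Icc 0 (j-1), P l) + ∑ l ∈ Finset.Icc j n, P l := by
    intro j h1 hjn
    have hdis : Disjoint (Finset.Icc 0 (j-1)) (Finset.Icc j n) := by
      refine Finset.disjoint_left.mpr fun x hx hx' => ?_
      rw [Finset.mem_Icc] at hx hx'
      omega
    rw [← Finset.sum_union hdis]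
    apply Finset.sum_congr _ fun _ _ => rfl
    ext x
    simp only [Finset.mem_Icc, Finset.mem_union]
    omega
  -- the Schur-complement iteration identity
  have key : ∀ j, k < j → j ≤ n →
      P k * R 0 * P j
        = P k * R 0 * P (j-1) * (P (j-1) * H * P j) * (R j * P j) := by
    intro j hkj hjn
    have h1j : 1 ≤ j := by omega
    set S0 : E →L[ℂ] E := ∑ l ∈ Finset.Icc 0 n, P l with hS0def
    set Sj : E →L[ℂ] E := ∑ l ∈ Finset.Icc j n, P l with hSjdef
    set D : E →L[ℂ] E := ∑ l ∈ Finset.Icc 0 (j-1), P l with hDdef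
    have c1 : (z • Sj - Sj * H * Sj) * R j = Sj := (hRinv j hjn).1
    have c2 : R 0 * (z • S0 - S0 * H * S0) = S0 := (hRinv 0 (Nat.zero_le n)).2
    have c4 : R 0 * S0 = R 0 := (hRS 0 (Nat.zero_le n)).1
    have c5 : Sj * P j = P j := hSP j j le_rfl hjn
    have c6 : P k * S0 = P k := hPS 0 k (Nat.zero_le k) (le_of_lt (lt_of_lt_of_le hkj hjn))
    have c7 : P k * Sj = 0 := hPS0 j k hkj
    have c8 : D * S0 = D := by
      rw [hDdef, hS0def, Finset.sum_mul]
      refine Finset.sum_congr rfl fun l hl => ?_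
      rw [Finset.mem_Icc] at hl
      exact hPS 0 l (Nat.zero_le l) (by omega)
    have c9 : D * Sj = 0 := by
      rw [hDdef, hSjdef, Finset.sum_mul]
      refine Finset.sum_eq_zero fun l hl => ?_
      rw [Finset.mem_Icc] at hl
      exact hPS0 j l (by omega)
    have c10 : S0 * Sj = Sj := hSS 0 j (Nat.zero_le j)
    have c11 : D * H * Sj = P (j-1) * H * P j := hDHS j h1j hjn
    have c13 : P (j-1) * P (j-1) = P (j-1) := hPP _
    have c14 : Sj * S0 = Sj := hSS' 0 j (Nat.zero_le j)
    have c15 : Sj * Sj = Sj := hSS j j le_rfl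
    have c12 : Sj = S0 - D := by rw [hsplit j h1j hjn, ← hDdef, ← hSjdef, add_sub_cancel_left]
    have c16 : R 0 * Sj = R 0 - R 0 * D := by rw [c12, mul_sub, c4]
    have hBj : Sj * (z • S0 - S0 * H * S0) * Sj = z • Sj - Sj * H * Sj := by
      simp only [mul_sub, sub_mul, mul_smul_comm, smul_mul_assoc, ← mul_assoc]
      rw [c14, c15, mul_assoc (Sj * H) S0 Sj, c10]
    have t1 : P k * R 0 * (z • S0 - S0 * H * S0) = P k := by
      rw [mul_assoc, c2, c6]
    have t2 : D * (z • S0 - S0 * H * S0) * Sj = -(P (j-1) * H * P j) := by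
      simp only [mul_sub, sub_mul, mul_smul_comm, smul_mul_assoc, ← mul_assoc]
      rw [c8, c9, smul_zero, zero_sub, mul_assoc (D * H) S0 Sj, c10, c11]
    have main : P k * R 0 * (z • Sj - Sj * H * Sj)
        = P k * R 0 * (P (j-1) * H * P j) := by
      calc P k * R 0 * (z • Sj - Sj * H * Sj)
          = P k * R 0 * (Sj * (z • S0 - S0 * H * S0) * Sj) := by rw [hBj]
        _ = P k * (R 0 * Sj) * (z • S0 - S0 * H * S0) * Sj := by
            simp only [mul_assoc]
        _ = P k * (R 0 - R 0 * D) * (z • S0 - S0 * H * S0) * Sj := by rw [c16]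
        _ = P k * R 0 * (z • S0 - S0 * H * S0) * Sj
              - P k * (R 0 * (D * (z • S0 - S0 * H * S0) * Sj)) := by
            simp only [mul_sub, sub_mul, mul_assoc]
            abel
        _ = P k * Sj - P k * (R 0 * -(P (j-1) * H * P j)) := by rw [t1, t2]
        _ = P k * R 0 * (P (j-1) * H * P j) := by
            rw [c7, mul_neg, mul_neg, zero_sub, neg_neg, ← mul_assoc]
    calc P k * R 0 * P j
        = P k * R 0 * ((z • Sj - Sj * H * Sj) * R j * P j) := by rw [c1, c5]
      _ = P k * R 0 * (z • Sj - Sj * H * Sj) * (R j * P j) := by simp only [mul_assoc]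
      _ = P k * R 0 * (P (j-1) * H * P j) * (R j * P j) := by rw [main]
      _ = P k * R 0 * (P (j-1) * P (j-1) * H * P j) * (R j * P j) := by rw [c13]
      _ = P k * R 0 * P (j-1) * (P (j-1) * H * P j) * (R j * P j) := by
          simp only [mul_assoc]
  -- the inductive norm bound
  have bound : ∀ j, k ≤ j → j ≤ n → ‖P k * R 0 * P j‖ ≤ ‖R 0‖ * q ^ (j - k) := by
    intro j hkj
    induction j, hkj using Nat.le_induction with
    | base =>
      intro _
      simp only [Nat.sub_self, pow_zero, mul_one]
      have h1 := norm_mul_le (P k * R 0) (P k)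
      have h2 := norm_mul_le (P k) (R 0)
      have h3 := hPnorm k
      nlinarith [norm_nonneg (R 0), norm_nonneg (P k), norm_nonneg (P k * R 0)]
    | succ j hkj ih =>
      intro hjn
      have hjn' : j ≤ n := by omega
      have ihb := ih hjn'
      have hkeq := key (j+1) (by omega) hjn
      rw [Nat.add_sub_cancel] at hkeq
      rw [hkeq]
      have hc := hcontr (j+1) (by omega) hjn
      rw [Nat.add_sub_cancel] at hc
      have h1 : ‖P k * R 0 * P j * (P j * H * P (j+1)) * (R (j+1) * P (j+1))‖
          ≤ ‖P k * R 0 * P j‖ * ‖P j * H * P (j+1)‖ * (‖R (j+1)‖ * ‖P (j+1)‖) := by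
        calc ‖P k * R 0 * P j * (P j * H * P (j+1)) * (R (j+1) * P (j+1))‖
            ≤ ‖P k * R 0 * P j * (P j * H * P (j+1))‖ * ‖R (j+1) * P (j+1)‖ :=
              norm_mul_le _ _
          _ ≤ ‖P k * R 0 * P j‖ * ‖P j * H * P (j+1)‖ * ‖R (j+1) * P (j+1)‖ :=
              mul_le_mul_of_nonneg_right (norm_mul_le _ _) (norm_nonneg _)
          _ ≤ ‖P k * R 0 * P j‖ * ‖P j * H * P (j+1)‖ * (‖R (j+1)‖ * ‖P (j+1)‖) :=
              mul_le_mul_of_nonneg_left (norm_mul_le _ _)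
                (mul_nonneg (norm_nonneg _) (norm_nonneg _))
      have h2 : ‖P k * R 0 * P j‖ * ‖P j * H * P (j+1)‖ * (‖R (j+1)‖ * ‖P (j+1)‖)
          ≤ ‖R 0‖ * q ^ (j - k) * q := by
        calc ‖P k * R 0 * P j‖ * ‖P j * H * P (j+1)‖ * (‖R (j+1)‖ * ‖P (j+1)‖)
            = (‖P j * H * P (j+1)‖ * ‖R (j+1)‖) * (‖P k * R 0 * P j‖ * ‖P (j+1)‖) := by
              ring
          _ ≤ q * (‖P k * R 0 * P j‖ * ‖P (j+1)‖) :=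
              mul_le_mul_of_nonneg_right hc
                (mul_nonneg (norm_nonneg _) (norm_nonneg _))
          _ ≤ q * (‖P k * R 0 * P j‖ * 1) :=
              mul_le_mul_of_nonneg_left
                (mul_le_mul_of_nonneg_left (hPnorm (j+1)) (norm_nonneg _)) hq0
          _ = q * ‖P k * R 0 * P j‖ := by ring
          _ ≤ q * (‖R 0‖ * q ^ (j - k)) := mul_le_mul_of_nonneg_left ihb hq0
          _ = ‖R 0‖ * q ^ (j - k) * q := by ring
      calc ‖P k * R 0 * P j * (P j * H * P (j+1)) * (R (j+1) * P (j+1))‖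
          ≤ ‖R 0‖ * q ^ (j - k) * q := le_trans h1 h2
        _ = ‖R 0‖ * q ^ (j + 1 - k) := by
            rw [show j + 1 - k = (j - k) + 1 from by omega, pow_succ, mul_assoc]
  exact bound n (le_of_lt hk) le_rfl
end

section
/- Let H be a bounded self-adjoint operator and P an orthogonal projection with complement Q = 1 − P, with z ∉ σ(H) ∪ σ(PHP|_{ran P}). Then P(z−H)^{-1}P − P(z − PHP)^{-1}P = P(z−PHP)^{-1} PHQ · Q(z−H)^{-1}Q · QHP (z−PHP)^{-1}P, and consequently ‖P(z−H)^{-1}P − P(z−PHP)^{-1}P‖ ≤ ‖(z−PHP)^{-1}‖² ‖(z−H)^{-1}‖ ‖PHQ‖². -/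
/-- Schur-complement / Feshbach identity: comparison of the
compressed resolvent `P(z−H)⁻¹P` with the resolvent of the compression
`P(z−PHP)⁻¹P`. Here `Rf = (z−H)⁻¹` and `Rp` is the inverse of `z − PHP` on the
range of `P`. -/
theorem schur_resolvent_comparison {E : Type*} [NormedAddCommGroup E]
    [InnerProductSpace ℂ E] [CompleteSpace E]
    (H : E →L[ℂ] E) (hH : IsSelfAdjoint H)
    (P : E →L[ℂ] E) (hPproj : IsIdempotentElem P) (hPsa : IsSelfAdjoint P)
    (z : ℂ)
    (Rf : E →L[ℂ] E)
    (hRf1 : (z • (1 : E →L[ℂ] E) - H).comp Rf = 1)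
    (hRf2 : Rf.comp (z • (1 : E →L[ℂ] E) - H) = 1)
    (Rp : E →L[ℂ] E)
    (hRpside : Rp = (P.comp Rp).comp P)
    (hRp1 : (z • P - (P.comp H).comp P).comp Rp = P)
    (hRp2 : Rp.comp (z • P - (P.comp H).comp P) = P) :
    (P.comp Rf).comp P - Rp =
        ((((Rp.comp ((P.comp H).comp (1 - P))).comp
            (((1 - P).comp Rf).comp (1 - P))).comp
            (((1 - P).comp H).comp P)).comp Rp)
      ∧ ‖(P.comp Rf).comp P - Rp‖ ≤
          ‖Rp‖ ^ 2 * ‖Rf‖ * ‖(P.comp H).comp (1 - P)‖ ^ 2 := by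
  have hcomp : ∀ f g : E →L[ℂ] E, f.comp g = f * g := fun _ _ => rfl
  simp only [hcomp] at hRf1 hRf2 hRpside hRp1 hRp2 ⊢
  obtain ⟨Q, hQdef⟩ : ∃ Q : E →L[ℂ] E, Q = 1 - P := ⟨_, rfl⟩
  rw [← hQdef]
  have hPP : P * P = P := hPproj
  have hPQ1 : P + Q = 1 := by rw [hQdef]; abel
  have hRpPl : P * Rp = Rp := by
    conv_lhs => rw [hRpside]
    rw [← mul_assoc, ← mul_assoc, hPP, ← hRpside]
  have hRpPr : Rp * P = Rp := by
    conv_lhs => rw [hRpside]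
    rw [mul_assoc (P * Rp) P P, hPP, ← hRpside]
  have hQQ : Q * Q = Q := by
    rw [hQdef]
    simp only [sub_mul, mul_sub, one_mul, mul_one, hPP]
    abel
  have hQRp : Q * Rp = 0 := by
    rw [hQdef]
    simp only [sub_mul, one_mul, hRpPl, sub_self]
  -- splittings
  have hPH : P * H = P * H * P + P * H * Q := by
    rw [← mul_add, hPQ1, mul_one]
  have e5 : H * Rp = P * (H * Rp) + Q * (H * Rp) := by
    rw [← add_mul, hPQ1, one_mul]
  -- step 1 : Rp * (z•1 - H) = P - Rp * (P*H*Q)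
  have h1 : Rp * (z • (1 : E →L[ℂ] E) - H) = P - Rp * (P * H * Q) := by
    have e1 : Rp * H = Rp * (P * H * P) + Rp * (P * H * Q) := by
      calc Rp * H = Rp * P * H := by rw [hRpPr]
        _ = Rp * (P * H) := by rw [mul_assoc]
        _ = Rp * (P * H * P + P * H * Q) := by rw [← hPH]
        _ = Rp * (P * H * P) + Rp * (P * H * Q) := by rw [mul_add]
    have e2 : Rp * (z • P - P * H * P) = P := hRp2
    calc Rp * (z • (1 : E →L[ℂ] E) - H)
        = z • Rp - Rp * H := by
          rw [mul_sub, mul_smul_comm, mul_one]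
      _ = (z • Rp - Rp * (P * H * P)) - Rp * (P * H * Q) := by rw [e1]; abel
      _ = Rp * (z • P - P * H * P) - Rp * (P * H * Q) := by
          rw [mul_sub, mul_smul_comm, hRpPr]
      _ = P - Rp * (P * H * Q) := by rw [e2]
  -- step 2 : Rp = P*Rf - Rp*(P*H*Q)*Rf
  have h2 : Rp = P * Rf - Rp * (P * H * Q) * Rf := by
    calc Rp = Rp * ((z • (1 : E →L[ℂ] E) - H) * Rf) := by rw [hRf1, mul_one]
      _ = (Rp * (z • (1 : E →L[ℂ] E) - H)) * Rf := by rw [mul_assoc]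
      _ = (P - Rp * (P * H * Q)) * Rf := by rw [h1]
      _ = P * Rf - Rp * (P * H * Q) * Rf := by rw [sub_mul]
  -- step 3 : P*Rf*P - Rp = Rp*(P*H*Q)*Rf*P
  have h3 : P * Rf * P - Rp = Rp * (P * H * Q) * Rf * P := by
    have e3 : Rp = P * Rf * P - Rp * (P * H * Q) * Rf * P := by
      calc Rp = Rp * P := hRpPr.symm
        _ = (P * Rf - Rp * (P * H * Q) * Rf) * P := by rw [← h2]
        _ = P * Rf * P - Rp * (P * H * Q) * Rf * P := by rw [sub_mul]
    nth_rewrite 1 [e3]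
    abel
  -- step 4 : (z•1 - H)*Rp = P - Q*(H*Rp)
  have h4 : (z • (1 : E →L[ℂ] E) - H) * Rp = P - Q * (H * Rp) := by
    have e4 : (z • P - P * H * P) * Rp = P := hRp1
    calc (z • (1 : E →L[ℂ] E) - H) * Rp
        = z • Rp - H * Rp := by rw [sub_mul, smul_mul_assoc, one_mul]
      _ = (z • Rp - P * (H * Rp)) - Q * (H * Rp) := by
          conv_lhs => rw [e5]
          abel
      _ = (z • P - P * H * P) * Rp - Q * (H * Rp) := by
          rw [sub_mul, smul_mul_assoc, mul_assoc, mul_assoc, hRpPl]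
      _ = P - Q * (H * Rp) := by rw [e4]
  -- step 5 : Rf * P = Rp + Rf * (Q * (H * Rp))
  have h5 : Rf * P = Rp + Rf * (Q * (H * Rp)) := by
    have e6 : Rf * P - Rf * (Q * (H * Rp)) = Rp := by
      symm
      calc Rp = (Rf * (z • (1 : E →L[ℂ] E) - H)) * Rp := by rw [hRf2, one_mul]
        _ = Rf * ((z • (1 : E →L[ℂ] E) - H) * Rp) := by rw [mul_assoc]
        _ = Rf * (P - Q * (H * Rp)) := by rw [h4]
        _ = Rf * P - Rf * (Q * (H * Rp)) := by rw [mul_sub]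
    exact eq_add_of_sub_eq e6
  -- key identity
  have key : P * Rf * P - Rp
      = Rp * (P * H * Q) * Rf * (Q * (H * Rp)) := by
    calc P * Rf * P - Rp = Rp * (P * H * Q) * Rf * P := h3
      _ = Rp * (P * H * Q) * (Rf * P) := by rw [mul_assoc]
      _ = Rp * (P * H * Q) * (Rp + Rf * (Q * (H * Rp))) := by rw [h5]
      _ = Rp * (P * H * Q) * Rp + Rp * (P * H * Q) * (Rf * (Q * (H * Rp))) := by
          rw [mul_add]
      _ = Rp * (P * H * Q) * Rf * (Q * (H * Rp)) := by
          have hz : Rp * (P * H * Q) * Rp = 0 := by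
            rw [mul_assoc Rp (P * H * Q) Rp, mul_assoc (P * H) Q Rp, hQRp,
              mul_zero, mul_zero]
          rw [hz, zero_add, mul_assoc (Rp * (P * H * Q)) Rf]
  have hQQ' : ∀ x : E →L[ℂ] E, Q * (Q * x) = Q * x := fun x => by
    rw [← mul_assoc, hQQ]
  constructor
  · rw [key]
    simp only [mul_assoc, hRpPl, hQQ']
  · -- norm estimate
    have key2 : P * Rf * P - Rp
        = Rp * (P * H * Q) * Rf * ((Q * (H * P)) * Rp) := by
      rw [key]
      congr 1
      rw [mul_assoc, mul_assoc, hRpPl]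
    have hQsa : star Q = Q := by
      rw [hQdef, star_sub, star_one, hPsa.star_eq]
    have hstar : star (P * H * Q) = Q * (H * P) := by
      rw [star_mul, star_mul, hQsa, hH.star_eq, hPsa.star_eq]
    have hnorm : ‖Q * (H * P)‖ = ‖P * H * Q‖ := by
      rw [← hstar, norm_star]
    rw [key2]
    calc ‖Rp * (P * H * Q) * Rf * (Q * (H * P) * Rp)‖
        ≤ ‖Rp * (P * H * Q) * Rf‖ * ‖Q * (H * P) * Rp‖ := norm_mul_le _ _
      _ ≤ (‖Rp * (P * H * Q)‖ * ‖Rf‖) * (‖Q * (H * P)‖ * ‖Rp‖) := by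
          exact mul_le_mul (norm_mul_le _ _) (norm_mul_le _ _)
            (norm_nonneg _) (by positivity)
      _ ≤ ((‖Rp‖ * ‖P * H * Q‖) * ‖Rf‖) * (‖Q * (H * P)‖ * ‖Rp‖) := by
          have := norm_mul_le Rp (P * H * Q)
          gcongr
      _ = ‖Rp‖ ^ 2 * ‖Rf‖ * ‖P * H * Q‖ ^ 2 := by rw [hnorm]; ring
end

section
/- Two 2-dimensional Bravais lattices L₁ = A₁ℤ², L₂ = A₂ℤ² are incommensurate (i.e., the only v ∈ ℝ² with L₁ ∪ L₂ + v = L₁ ∪ L₂ is v = 0) if and only if there is no nonzero v simultaneously in L₁ and L₂, i.e. L₁ ∩ L₂ = {0}. In particular, if A₂ = R(θ)A₁ for a rotation R(θ) and L₁ ∩ L₂ = {0} with L₁ ≠ L₂, then the pair is incommensurate. -/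
/-- The Bravais lattice `Aℤ²`. -/
def bravais (A : Matrix (Fin 2) (Fin 2) ℝ) : Set (Fin 2 → ℝ) :=
  {x | ∃ m : Fin 2 → ℤ, x = A.mulVec (fun i => (m i : ℝ))}

/-- Incommensurability: the only common translation of `L₁ ∪ L₂` is `0`. -/
def Incommensurate (L₁ L₂ : Set (Fin 2 → ℝ)) : Prop :=
  ∀ v : Fin 2 → ℝ, (fun x => x + v) '' (L₁ ∪ L₂) = L₁ ∪ L₂ ↔ v = 0

/-- Rotation matrix. -/
noncomputable def rot (θ : ℝ) : Matrix (Fin 2) (Fin 2) ℝ :=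
  !![Real.cos θ, -Real.sin θ; Real.sin θ, Real.cos θ]

lemma bravais_zero (A : Matrix (Fin 2) (Fin 2) ℝ) : (0 : Fin 2 → ℝ) ∈ bravais A := by
  refine ⟨0, ?_⟩
  have h : (fun i => (((0 : Fin 2 → ℤ) i : ℝ))) = (0 : Fin 2 → ℝ) := by
    funext i; simp
  rw [h, Matrix.mulVec_zero]

lemma bravais_sub {A : Matrix (Fin 2) (Fin 2) ℝ} {x y : Fin 2 → ℝ}
    (hx : x ∈ bravais A) (hy : y ∈ bravais A) : x - y ∈ bravais A := by
  obtain ⟨m, rfl⟩ := hx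
  obtain ⟨n, rfl⟩ := hy
  refine ⟨m - n, ?_⟩
  have h : (fun i => (((m - n) i : ℤ) : ℝ)) =
      (fun i => ((m i : ℤ) : ℝ)) - (fun i => ((n i : ℤ) : ℝ)) := by
    funext i; simp [Pi.sub_apply]
  rw [h, Matrix.mulVec_sub]

lemma bravais_add {A : Matrix (Fin 2) (Fin 2) ℝ} {x y : Fin 2 → ℝ}
    (hx : x ∈ bravais A) (hy : y ∈ bravais A) : x + y ∈ bravais A := by
  have := bravais_sub hx (bravais_sub (bravais_zero A) hy)
  simpa using this

lemma bravais_translate {A : Matrix (Fin 2) (Fin 2) ℝ} {v : Fin 2 → ℝ}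
    (hv : v ∈ bravais A) : (fun x => x + v) '' bravais A = bravais A := by
  ext x
  constructor
  · rintro ⟨y, hy, rfl⟩
    exact bravais_add hy hv
  · intro hx
    exact ⟨x - v, bravais_sub hx hv, by simp⟩

lemma bravais_nonzero {A : Matrix (Fin 2) (Fin 2) ℝ} (hA : IsUnit A.det) :
    ∃ x ∈ bravais A, x ≠ 0 := by
  refine ⟨A.mulVec (fun i => ((if i = 0 then (1:ℤ) else 0 : ℤ) : ℝ)),
    ⟨fun i => if i = 0 then 1 else 0, rfl⟩, ?_⟩
  intro h
  have hinj := (Matrix.mulVec_injective_iff_isUnit (A := A)).mpr ((Matrix.isUnit_iff_isUnit_det A).mpr hA)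
  have h0 : (fun i => ((if i = 0 then (1:ℤ) else 0 : ℤ) : ℝ)) = (0 : Fin 2 → ℝ) := by
    apply hinj
    rw [h, Matrix.mulVec_zero]
  have := congrFun h0 0
  simp at this

/-- two Bravais lattices are incommensurate iff they intersect
trivially; in particular a twisted pair with trivial intersection and
`L₁ ≠ L₂` is incommensurate. -/
theorem incommensurate_iff_trivial_intersection
    (A₁ A₂ : Matrix (Fin 2) (Fin 2) ℝ) (hA₁ : IsUnit A₁.det) (hA₂ : IsUnit A₂.det) :
    (Incommensurate (bravais A₁) (bravais A₂) ↔
      bravais A₁ ∩ bravais A₂ = {0}) ∧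
    (∀ θ : ℝ, A₂ = rot θ * A₁ →
      bravais A₁ ∩ bravais A₂ = {0} → bravais A₁ ≠ bravais A₂ →
      Incommensurate (bravais A₁) (bravais A₂)) := by
  have main : Incommensurate (bravais A₁) (bravais A₂) ↔
      bravais A₁ ∩ bravais A₂ = {0} := by
    constructor
    · intro hInc
      apply Set.Subset.antisymm
      · rintro v ⟨hv₁, hv₂⟩
        have : (fun x => x + v) '' (bravais A₁ ∪ bravais A₂) = bravais A₁ ∪ bravais A₂ := by
          rw [Set.image_union, bravais_translate hv₁, bravais_translate hv₂]
        exact (hInc v).mp this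
      · rintro v (rfl : v = 0)
        exact ⟨bravais_zero A₁, bravais_zero A₂⟩
    · intro hint v
      constructor
      · intro himg
        have hstep : ∀ x ∈ bravais A₁ ∪ bravais A₂,
            x + v ∈ bravais A₁ ∪ bravais A₂ := by
          intro x hx
          rw [← himg]
          exact ⟨x, hx, rfl⟩
        have hv : v ∈ bravais A₁ ∪ bravais A₂ := by
          have := hstep 0 (Or.inl (bravais_zero A₁))
          simpa using this
        have hmem : v ∈ bravais A₁ ∩ bravais A₂ := by
          rcases hv with hv₁ | hv₂
          · refine ⟨hv₁, ?_⟩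
            obtain ⟨x, hx, hxne⟩ := bravais_nonzero hA₂
            rcases hstep x (Or.inr hx) with h | h
            · exfalso
              have hx1 : x ∈ bravais A₁ := by
                have := bravais_sub h hv₁
                simpa using this
              have : x ∈ ({0} : Set (Fin 2 → ℝ)) := hint ▸ ⟨hx1, hx⟩
              exact hxne this
            · have := bravais_sub h hx
              simpa using this
          · refine ⟨?_, hv₂⟩
            obtain ⟨x, hx, hxne⟩ := bravais_nonzero hA₁
            rcases hstep x (Or.inl hx) with h | h
            · have := bravais_sub h hx
              simpa using this
            · exfalso
              have hx2 : x ∈ bravais A₂ := by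
                have := bravais_sub h hv₂
                simpa using this
              have : x ∈ ({0} : Set (Fin 2 → ℝ)) := hint ▸ ⟨hx, hx2⟩
              exact hxne this
        have : v ∈ ({0} : Set (Fin 2 → ℝ)) := hint ▸ hmem
        simpa using this
      · rintro rfl
        simp
  exact ⟨main, fun θ _ h _ => main.mpr h⟩
end
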